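/- Let q be a prime power. In ℝ[[t]], the infinite product ∏_{n≥4} (1 − q^{−n} t)^{−(⌊n/2⌋ − 1)} converges term by term and its limit equals exp(∑_{v≥1} t^v/(v · (q^{2v} − 1)(q^{2v} − q^v))). -/

import Mathlib

/-!
Taking logarithms, `-log (1 - q⁻ⁿ t) = ∑_{v ≥ 1} q^{-nv} tᵛ / v`, so the logarithm of the product
has `tᵛ`-coefficient `(1 / v) ∑ₙ (⌊n/2⌋ - 1) yⁿ` with `y = q⁻ᵛ`. This generating function is
`y⁴ / ((1 - y)(1 - y²)) = 1 / ((q^{2v} - 1)(q^{2v} - qᵛ))`. Formally, `exp` turns sums of series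
without constant term into products (both sides solve the same linear differential equation),
`exp (-log (1 - c t)) = (1 - c t)⁻¹`, and `exp` is continuous for coefficientwise convergence,
because the `tᵏ`-coefficient of `exp h` only involves `h, …, hᵏ`.
-/

open Filter

noncomputable def pexp (h : PowerSeries ℝ) : PowerSeries ℝ :=
  PowerSeries.mk fun k =>
    ∑ m ∈ Finset.range (k + 1), ((Nat.factorial m : ℝ))⁻¹ * PowerSeries.coeff (R := ℝ) k (h ^ m)

open PowerSeries

namespace PowerSeries

variable {R : Type*} [CommRing R]

theorem coeff_pow_eq_zero_of_lt {h : R⟦X⟧} (hh : constantCoeff h = 0) {k m : ℕ} (hkm : k < m) :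
    coeff k (h ^ m) = 0 :=
  coeff_of_lt_order k <| (Nat.cast_lt.2 hkm).trans_le (le_order_pow_of_constantCoeff_eq_zero m hh)

theorem eq_of_derivative_eq_mul [IsAddTorsionFree R] {u f g : R⟦X⟧} (hf : d⁄dX R f = u * f)
    (hg : d⁄dX R g = u * g) (h0 : constantCoeff f = constantCoeff g) : f = g := by
  ext k
  induction k using Nat.strong_induction_on with
  | _ k ih =>
    cases k with
    | zero => simpa using h0
    | succ k =>
      have hu : coeff k (u * f) = coeff k (u * g) := by
        rw [coeff_mul, coeff_mul]
        exact Finset.sum_congr rfl fun p hp => by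
          rw [ih p.2 (by rw [Finset.HasAntidiagonal.mem_antidiagonal] at hp; omega)]
      have hfg : coeff (k + 1) f * (k + 1) = coeff (k + 1) g * (k + 1) := by
        rw [← coeff_derivative, ← coeff_derivative, hf, hg, hu]
      rw [← Nat.cast_succ, mul_comm, ← nsmul_eq_mul, mul_comm, ← nsmul_eq_mul] at hfg
      exact (smul_right_inj k.succ_ne_zero).mp hfg

theorem mk_pow_mul_one_sub_C_mul_X (c : R) : mk (c ^ ·) * (1 - C c * X) = 1 := by
  simpa [rescale_mk] using congrArg (rescale c) (mk_one_mul_one_sub_eq_one R)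

theorem inv_one_sub_C_mul_X {K : Type*} [Field K] (c : K) : (1 - C c * X)⁻¹ = mk (c ^ ·) :=
  (inv_eq_iff_mul_eq_one (by simp)).2 (mk_pow_mul_one_sub_C_mul_X c)

end PowerSeries

theorem hasSum_div_two_sub_one_mul_pow {𝕜 : Type*} [NormedField 𝕜] [CompleteSpace 𝕜]
    [CharZero 𝕜] {y : 𝕜} (hy : ‖y‖ < 1) :
    HasSum (fun n : ℕ => ((n / 2 - 1 : ℕ) : 𝕜) * y ^ n) (y ^ 4 / ((1 - y) * (1 - y ^ 2))) := by
  have hy1 : 1 - y ≠ 0 := fun h => by simp [← sub_eq_zero.1 h] at hy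
  have hy2 : 1 + y ≠ 0 := fun h => by simp [eq_neg_of_add_eq_zero_right h] at hy
  have hy3 : 1 - y ^ 2 ≠ 0 := by
    rw [show 1 - y ^ 2 = (1 - y) * (1 + y) by ring]
    exact mul_ne_zero hy1 hy2
  -- `(n + 4) / 2 - 1 = (2 n + 3 + (-1) ^ n) / 4`
  have hcoeff (n : ℕ) : (((n + 4) / 2 - 1 : ℕ) : 𝕜) * y ^ (n + 4) =
      y ^ 4 / 2 * (n * y ^ n) + 3 * y ^ 4 / 4 * y ^ n + y ^ 4 / 4 * (-y) ^ n := by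
    rw [neg_pow]
    obtain ⟨m, rfl | rfl⟩ := n.even_or_odd'
    · rw [(even_two_mul m).neg_one_pow, show (2 * m + 4) / 2 - 1 = m + 1 by omega]
      push_cast
      ring
    · rw [(odd_two_mul_add_one m).neg_one_pow, show (2 * m + 1 + 4) / 2 - 1 = m + 1 by omega]
      push_cast
      ring
  have hsum := (((hasSum_coe_mul_geometric_of_norm_lt_one hy).mul_left (y ^ 4 / 2)).add
    ((hasSum_geometric_of_norm_lt_one hy).mul_left (3 * y ^ 4 / 4))).add
    ((hasSum_geometric_of_norm_lt_one (ξ := -y) (by rwa [norm_neg])).mul_left (y ^ 4 / 4))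
  simp_rw [← hcoeff] at hsum
  convert (hasSum_nat_add_iff (f := fun n : ℕ => ((n / 2 - 1 : ℕ) : 𝕜) * y ^ n) 4).1 hsum using 1
  · rfl
  rw [Finset.sum_eq_zero fun i hi => by
    simp [show i / 2 - 1 = 0 by rw [Finset.mem_range] at hi; omega], add_zero,
    sub_neg_eq_add]
  field_simp
  ring

theorem constantCoeff_pexp (h : ℝ⟦X⟧) : constantCoeff (pexp h) = 1 := by
  rw [← coeff_zero_eq_constantCoeff_apply]
  simp [pexp]

theorem pexp_zero : pexp 0 = 1 := by
  ext k
  rw [pexp, coeff_mk, Finset.sum_range_succ', Finset.sum_eq_zero fun m _ => by simp]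
  simp

theorem pexp_eq_subst_exp {h : ℝ⟦X⟧} (hh : constantCoeff h = 0) : pexp h = (exp ℝ).subst h := by
  ext k
  rw [coeff_subst' (.of_constantCoeff_zero' hh),
    finsum_eq_sum_of_support_subset (s := Finset.range (k + 1))]
  · simp [pexp, coeff_exp]
  · intro m hm
    by_contra hmk
    exact hm (by simp [coeff_pow_eq_zero_of_lt hh (by simpa using hmk)])

theorem derivative_pexp {h : ℝ⟦X⟧} (hh : constantCoeff h = 0) :
    d⁄dX ℝ (pexp h) = d⁄dX ℝ h * pexp h := by
  rw [pexp_eq_subst_exp hh, derivative_subst (.of_constantCoeff_zero' hh), derivative_exp,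
    mul_comm]

theorem pexp_add {a b : ℝ⟦X⟧} (ha : constantCoeff a = 0) (hb : constantCoeff b = 0) :
    pexp (a + b) = pexp a * pexp b := by
  refine eq_of_derivative_eq_mul (derivative_pexp (by simp [ha, hb])) ?_
    (by simp [constantCoeff_pexp])
  rw [Derivation.leibniz, derivative_pexp ha, derivative_pexp hb, map_add, smul_eq_mul,
    smul_eq_mul]
  ring

theorem pexp_sum {ι : Type*} (s : Finset ι) {f : ι → ℝ⟦X⟧}
    (hf : ∀ i ∈ s, constantCoeff (f i) = 0) : pexp (∑ i ∈ s, f i) = ∏ i ∈ s, pexp (f i) := by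
  induction s using Finset.cons_induction with
  | empty => simp [pexp_zero]
  | cons i s his ih =>
    rw [Finset.forall_mem_cons] at hf
    rw [Finset.sum_cons, Finset.prod_cons,
      pexp_add hf.1 (by simp [map_sum, Finset.sum_eq_zero hf.2]), ih hf.2]

theorem pexp_nsmul {h : ℝ⟦X⟧} (hh : constantCoeff h = 0) (n : ℕ) : pexp (n • h) = pexp h ^ n := by
  simpa using pexp_sum (Finset.range n) (f := fun _ => h) fun _ _ => hh

section NegLogOneSubCMulX

variable {K : Type*} [Field K]

noncomputable def negLogOneSubCMulX (c : K) : K⟦X⟧ :=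
  mk fun v => if v = 0 then 0 else c ^ v / v

@[simp]
theorem constantCoeff_negLogOneSubCMulX (c : K) : constantCoeff (negLogOneSubCMulX c) = 0 := by
  rw [← coeff_zero_eq_constantCoeff_apply]
  simp [negLogOneSubCMulX]

theorem derivative_negLogOneSubCMulX [CharZero K] (c : K) :
    d⁄dX K (negLogOneSubCMulX c) = C c * (1 - C c * X)⁻¹ := by
  ext k
  rw [inv_one_sub_C_mul_X, coeff_derivative, coeff_C_mul]
  simp only [negLogOneSubCMulX, coeff_mk, k.succ_ne_zero, if_false]
  field_simp
  push_cast
  ring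

end NegLogOneSubCMulX

theorem pexp_negLogOneSubCMulX (c : ℝ) : pexp (negLogOneSubCMulX c) = (1 - C c * X)⁻¹ := by
  refine eq_of_derivative_eq_mul (u := C c * (1 - C c * X)⁻¹) ?_ ?_ (by simp [constantCoeff_pexp])
  · rw [derivative_pexp (constantCoeff_negLogOneSubCMulX c), derivative_negLogOneSubCMulX]
  · simp only [derivative_inv', map_sub, Derivation.map_one_eq_zero, Derivation.leibniz,
      derivative_X, smul_eq_mul, mul_one, derivative_C, mul_zero, add_zero, zero_sub, mul_neg,
      neg_mul, neg_neg]
    ring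

theorem prod_inv_one_sub_C_mul_X_pow {ι : Type*} (s : Finset ι) (c : ι → ℝ) (e : ι → ℕ) :
    ∏ i ∈ s, (1 - C (c i) * X)⁻¹ ^ e i = pexp (∑ i ∈ s, e i • negLogOneSubCMulX (c i)) := by
  rw [pexp_sum s fun i _ => by simp]
  exact Finset.prod_congr rfl fun i _ => by
    rw [pexp_nsmul (constantCoeff_negLogOneSubCMulX _), pexp_negLogOneSubCMulX]

section PiTopology

open WithPiTopology

theorem continuous_pexp : Continuous pexp := by
  refine continuous_iff_continuousAt.2 fun h => (tendsto_iff_coeff_tendsto ℝ _ _ _).2 fun k => ?_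
  simp only [pexp, coeff_mk]
  exact (continuous_finsetSum _ fun m _ =>
    continuous_const.mul ((continuous_coeff ℝ k).comp (continuous_pow m))).tendsto h

theorem hasSum_nsmul_negLogOneSubCMulX {q : ℝ} (hq : 1 < q) :
    HasSum (fun n : ℕ => (n / 2 - 1) • negLogOneSubCMulX (q ^ n)⁻¹)
      (mk fun v => if v = 0 then 0 else 1 / (v * (q ^ (2 * v) - 1) * (q ^ (2 * v) - q ^ v))) := by
  rw [hasSum_iff_hasSum_coeff]
  rintro (_ | v)
  · simp [negLogOneSubCMulX]
  have hQ : 1 < q ^ (v + 1) := one_lt_pow₀ hq v.succ_ne_zero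
  have hy : ‖(q ^ (v + 1))⁻¹‖ < 1 := by
    rw [norm_inv, Real.norm_of_nonneg (by positivity)]
    exact inv_lt_one_of_one_lt₀ hQ
  convert (hasSum_div_two_sub_one_mul_pow hy).div_const ((v + 1 : ℕ) : ℝ) using 1
  · funext n
    rw [map_nsmul, nsmul_eq_mul, negLogOneSubCMulX, coeff_mk, if_neg v.succ_ne_zero]
    simp only [inv_pow, ← pow_mul, mul_comm n]
    ring
  · rw [coeff_mk, if_neg v.succ_ne_zero, pow_mul' q 2]
    generalize q ^ (v + 1) = Q at hQ ⊢
    have : Q - 1 ≠ 0 := by linarith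
    have : Q + 1 ≠ 0 := by linarith
    field_simp

end PiTopology

/-- For a prime power `q`, the infinite product
`∏_{n ≥ 4} (1 - q^{-n} t)^{-(⌊n/2⌋ - 1)}` in `ℝ[[t]]` converges term by term to the
zeta function `Z(BGL₂, t) = exp (∑_{v ≥ 1} t^v / (v (q^{2v} - 1)(q^{2v} - q^v)))`. -/
theorem zeta_BGL2_product (q : ℕ) (hq : IsPrimePow q) :
    ∀ k : ℕ,
      Tendsto
        (fun N : ℕ => PowerSeries.coeff (R := ℝ) k
          (∏ n ∈ Finset.Icc 4 N,
            ((1 - PowerSeries.C (R := ℝ) (((q : ℝ) ^ n)⁻¹) * PowerSeries.X)⁻¹) ^ (n / 2 - 1)))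
        atTop
        (nhds (PowerSeries.coeff (R := ℝ) k (pexp (PowerSeries.mk fun v =>
          if v = 0 then 0
          else 1 / (v * ((q : ℝ) ^ (2 * v) - 1) * ((q : ℝ) ^ (2 * v) - (q : ℝ) ^ v)))))) := by
  intro k
  have hprod (N : ℕ) : ∏ n ∈ Finset.Icc 4 N, (1 - C ((q : ℝ) ^ n)⁻¹ * X)⁻¹ ^ (n / 2 - 1) =
      pexp (∑ n ∈ Finset.range (N + 1), (n / 2 - 1) • negLogOneSubCMulX ((q : ℝ) ^ n)⁻¹) := by
    rw [← prod_inv_one_sub_C_mul_X_pow]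
    refine Finset.prod_subset (fun n hn => ?_) fun n hN hn => ?_
    · simp only [Finset.mem_Icc, Finset.mem_range] at hn ⊢
      omega
    · simp only [Finset.mem_Icc, Finset.mem_range] at hN hn
      rw [show n / 2 - 1 = 0 by omega, pow_zero]
  simp_rw [hprod]
  have hsum := hasSum_nsmul_negLogOneSubCMulX (q := q) (by exact_mod_cast hq.one_lt)
  open PowerSeries.WithPiTopology in
  exact ((continuous_coeff ℝ k).tendsto _).comp ((continuous_pexp.tendsto _).comp
    (hsum.tendsto_sum_nat.comp (tendsto_add_atTop_nat 1)))
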